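/- arXiv:2310.16655 — 3 statements merged into one kernel-verified Lean document; each statement's English description precedes it below -/
import Mathlib

section
/- Let F(d)(x,y) = |r(x) − r(y)| + γ·d(t(x), t(y)) on the complete metric space of bounded functions S × S → ℝ with sup norm, where r: S → ℝ is bounded, t: S → S, γ ∈ [0,1). Then F maps bounded functions to bounded functions and satisfies ‖F(d) − F(d')‖_∞ ≤ γ·‖d − d'‖_∞; consequently F has a unique fixed point. -/
open BoundedContinuousFunction in

/-- The operator `F(d)(x,y) = |r(x) − r(y)| + γ·d(t(x), t(y))` with bounded `r` and
`γ ∈ [0,1)` maps bounded functions to bounded functions, is a γ-contraction in the sup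
norm (encoded pointwise via bounds `C`), and has a unique fixed point among bounded
functions. -/
theorem stmt_6 {S : Type*} [Nonempty S] (γ : ℝ) (hγ0 : 0 ≤ γ) (hγ1 : γ < 1)
    (r : S → ℝ) (t : S → S) (hrb : ∃ C, ∀ x, |r x| ≤ C) :
    (∀ d : S → S → ℝ, (∃ C, ∀ x y, |d x y| ≤ C) →
        ∃ C, ∀ x y, |(|r x - r y| + γ * d (t x) (t y))| ≤ C) ∧
    (∀ d d' : S → S → ℝ, ∀ C : ℝ, (∀ x y, |d x y - d' x y| ≤ C) →
        ∀ x y, |(|r x - r y| + γ * d (t x) (t y)) - (|r x - r y| + γ * d' (t x) (t y))| ≤ γ * C) ∧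
    (∃! d : {f : S → S → ℝ // ∃ C, ∀ x y, |f x y| ≤ C},
        ∀ x y, d.1 x y = |r x - r y| + γ * d.1 (t x) (t y)) := by
  obtain ⟨C₀, hC₀⟩ := hrb
  refine ⟨?_, ?_, ?_⟩
  · rintro d ⟨C, hC⟩
    refine ⟨2 * C₀ + γ * C, fun x y => ?_⟩
    have h1 : |r x - r y| ≤ 2 * C₀ := by
      calc |r x - r y| ≤ |r x| + |r y| := abs_sub _ _
        _ ≤ C₀ + C₀ := add_le_add (hC₀ x) (hC₀ y)
        _ = 2 * C₀ := by ring
    have h2 : |γ * d (t x) (t y)| ≤ γ * C := by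
      rw [abs_mul, abs_of_nonneg hγ0]
      exact mul_le_mul_of_nonneg_left (hC _ _) hγ0
    calc |(|r x - r y| + γ * d (t x) (t y))|
        ≤ |(|r x - r y|)| + |γ * d (t x) (t y)| := abs_add_le _ _
      _ = |r x - r y| + |γ * d (t x) (t y)| := by rw [abs_abs]
      _ ≤ 2 * C₀ + γ * C := add_le_add h1 h2
  · intro d d' C hC x y
    have : |r x - r y| + γ * d (t x) (t y) - (|r x - r y| + γ * d' (t x) (t y))
        = γ * (d (t x) (t y) - d' (t x) (t y)) := by ring
    rw [this, abs_mul, abs_of_nonneg hγ0]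
    exact mul_le_mul_of_nonneg_left (hC _ _) hγ0
  · letI : TopologicalSpace S := ⊥
    haveI : DiscreteTopology S := ⟨rfl⟩
    letI : TopologicalSpace (S × S) := instTopologicalSpaceProd
    -- the operator on bounded continuous functions
    set Φ : ((S × S) →ᵇ ℝ) → ((S × S) →ᵇ ℝ) := fun d =>
      BoundedContinuousFunction.ofNormedAddCommGroup
        (fun p => |r p.1 - r p.2| + γ * d (t p.1, t p.2))
        (continuous_of_discreteTopology) (2 * C₀ + γ * ‖d‖) (by
          intro p
          have h1 : |r p.1 - r p.2| ≤ 2 * C₀ := by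
            calc |r p.1 - r p.2| ≤ |r p.1| + |r p.2| := abs_sub _ _
              _ ≤ C₀ + C₀ := add_le_add (hC₀ _) (hC₀ _)
              _ = 2 * C₀ := by ring
          have h2 : |γ * d (t p.1, t p.2)| ≤ γ * ‖d‖ := by
            rw [abs_mul, abs_of_nonneg hγ0]
            exact mul_le_mul_of_nonneg_left (d.norm_coe_le_norm _) hγ0
          calc ‖|r p.1 - r p.2| + γ * d (t p.1, t p.2)‖
              ≤ |(|r p.1 - r p.2|)| + |γ * d (t p.1, t p.2)| := abs_add_le _ _
            _ = |r p.1 - r p.2| + |γ * d (t p.1, t p.2)| := by rw [abs_abs]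
            _ ≤ 2 * C₀ + γ * ‖d‖ := add_le_add h1 h2) with hΦ
    have hΦapp : ∀ (d : (S × S) →ᵇ ℝ) (p : S × S),
        Φ d p = |r p.1 - r p.2| + γ * d (t p.1, t p.2) := fun d p => rfl
    have hlip : LipschitzWith γ.toNNReal Φ := by
      apply LipschitzWith.of_dist_le_mul
      intro d d'
      rw [Real.coe_toNNReal _ hγ0]
      apply BoundedContinuousFunction.dist_le_iff_of_nonempty.mpr
      intro p
      rw [hΦapp, hΦapp, Real.dist_eq]
      have : |r p.1 - r p.2| + γ * d (t p.1, t p.2) - (|r p.1 - r p.2| + γ * d' (t p.1, t p.2))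
          = γ * (d (t p.1, t p.2) - d' (t p.1, t p.2)) := by ring
      rw [this, abs_mul, abs_of_nonneg hγ0]
      have := BoundedContinuousFunction.dist_coe_le_dist (f := d) (g := d') (t p.1, t p.2)
      rw [Real.dist_eq] at this
      exact mul_le_mul_of_nonneg_left this hγ0
    have hcontr : ContractingWith γ.toNNReal Φ := by
      refine ⟨?_, hlip⟩
      rw [← NNReal.coe_lt_coe, Real.coe_toNNReal _ hγ0]
      exact hγ1
    let p := hcontr.fixedPoint Φ
    have hfix : Φ p = p := hcontr.fixedPoint_isFixedPt
    have hpfix : ∀ x y, p (x, y) = |r x - r y| + γ * p (t x, t y) := by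
      intro x y
      conv_lhs => rw [← hfix]
      exact hΦapp p (x, y)
    refine ⟨⟨fun x y => p (x, y), ⟨‖p‖, fun x y => p.norm_coe_le_norm _⟩⟩, hpfix, ?_⟩
    rintro ⟨f, C, hC⟩ hf
    -- package f as a bounded continuous function
    set g : (S × S) →ᵇ ℝ := BoundedContinuousFunction.ofNormedAddCommGroup
      (fun q => f q.1 q.2) (continuous_of_discreteTopology) C (fun q => hC q.1 q.2) with hg
    have hgfix : Φ g = g := by
      ext q
      rw [hΦapp]
      exact (hf q.1 q.2).symm
    have : g = p := hcontr.fixedPoint_unique hgfix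
    apply Subtype.ext
    funext x y
    have : g (x, y) = p (x, y) := by rw [this]
    simpa [hg] using this
end

section
/- Let F_r and F_{r'} be the operators F_r(d)(x,y) = |r(x) − r(y)| + γ·d(t(x), t(y)) associated with two bounded reward functions r and r', sharing the same transition t and discount γ ∈ [0,1), with fixed points d_r and d_{r'}. Then ‖d_r − d_{r'}‖_∞ ≤ 2‖r − r'‖_∞/(1 − γ). -/
/-- If `d_r` and `d_{r'}` are bounded fixed points of the operators associated with two
bounded rewards `r, r'` (same transition `t`, discount `γ ∈ [0,1)`), then
`‖d_r − d_{r'}‖_∞ ≤ 2‖r − r'‖_∞/(1 − γ)` (sup norms encoded via arbitrary bounds `C`). -/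
theorem stmt_12 {S : Type*} [Nonempty S] (γ : ℝ) (hγ0 : 0 ≤ γ) (hγ1 : γ < 1)
    (r r' : S → ℝ) (t : S → S)
    (hrb : ∃ C, ∀ x, |r x| ≤ C) (hr'b : ∃ C, ∀ x, |r' x| ≤ C)
    (dr dr' : S → S → ℝ)
    (hdrb : ∃ C, ∀ x y, |dr x y| ≤ C) (hdr'b : ∃ C, ∀ x y, |dr' x y| ≤ C)
    (hfix : ∀ x y, dr x y = |r x - r y| + γ * dr (t x) (t y))
    (hfix' : ∀ x y, dr' x y = |r' x - r' y| + γ * dr' (t x) (t y)) :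
    ∀ C : ℝ, (∀ x, |r x - r' x| ≤ C) →
      ∀ x y, |dr x y - dr' x y| ≤ 2 * C / (1 - γ) := by
  intro C hC x y
  obtain ⟨M1, hM1⟩ := hdrb
  obtain ⟨M2, hM2⟩ := hdr'b
  obtain ⟨x0⟩ := ‹Nonempty S›
  have hCnn : 0 ≤ C := le_trans (abs_nonneg _) (hC x0)
  have h1γ : 0 < 1 - γ := by linarith
  have key : ∀ n : ℕ, ∀ x y, |dr x y - dr' x y| ≤ 2 * C / (1 - γ) + γ ^ n * (M1 + M2) := by
    intro n
    induction n with
    | zero =>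
      intro x y
      have hpos : 0 ≤ 2 * C / (1 - γ) := by positivity
      calc |dr x y - dr' x y| ≤ |dr x y| + |dr' x y| := abs_sub _ _
        _ ≤ M1 + M2 := add_le_add (hM1 x y) (hM2 x y)
        _ ≤ 2 * C / (1 - γ) + γ ^ 0 * (M1 + M2) := by simp; linarith
    | succ n ih =>
      intro x y
      have h1 : |(|r x - r y|) - (|r' x - r' y|)| ≤ 2 * C := by
        have habs := abs_abs_sub_abs_le_abs_sub (r x - r y) (r' x - r' y)
        have h2 : |r x - r y - (r' x - r' y)| ≤ C + C := by
          have he : r x - r y - (r' x - r' y) = (r x - r' x) + -(r y - r' y) := by ring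
          rw [he]
          calc |(r x - r' x) + -(r y - r' y)| ≤ |r x - r' x| + |-(r y - r' y)| := abs_add_le _ _
            _ = |r x - r' x| + |r y - r' y| := by rw [abs_neg]
            _ ≤ C + C := add_le_add (hC x) (hC y)
        linarith
      have step : |dr x y - dr' x y|
          ≤ 2 * C + γ * |dr (t x) (t y) - dr' (t x) (t y)| := by
        rw [hfix x y, hfix' x y]
        have he : |r x - r y| + γ * dr (t x) (t y) - (|r' x - r' y| + γ * dr' (t x) (t y))
            = ((|r x - r y|) - (|r' x - r' y|)) + γ * (dr (t x) (t y) - dr' (t x) (t y)) := by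
          ring
        rw [he]
        calc |((|r x - r y|) - (|r' x - r' y|)) + γ * (dr (t x) (t y) - dr' (t x) (t y))|
            ≤ |(|r x - r y|) - (|r' x - r' y|)| + |γ * (dr (t x) (t y) - dr' (t x) (t y))| :=
              abs_add_le _ _
          _ ≤ 2 * C + γ * |dr (t x) (t y) - dr' (t x) (t y)| := by
              rw [abs_mul, abs_of_nonneg hγ0]; linarith
      have ihh := ih (t x) (t y)
      have hmul : γ * |dr (t x) (t y) - dr' (t x) (t y)|
          ≤ γ * (2 * C / (1 - γ) + γ ^ n * (M1 + M2)) :=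
        mul_le_mul_of_nonneg_left ihh hγ0
      have heq : 2 * C + γ * (2 * C / (1 - γ) + γ ^ n * (M1 + M2))
          = 2 * C / (1 - γ) + γ ^ (n + 1) * (M1 + M2) := by
        field_simp
        ring
      linarith [step, hmul, heq.le, heq.ge]
  have hlim : Filter.Tendsto (fun n : ℕ => 2 * C / (1 - γ) + γ ^ n * (M1 + M2))
      Filter.atTop (nhds (2 * C / (1 - γ) + 0 * (M1 + M2))) :=
    Filter.Tendsto.add tendsto_const_nhds
      ((tendsto_pow_atTop_nhds_zero_of_lt_one hγ0 hγ1).mul tendsto_const_nhds)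
  have hfin : |dr x y - dr' x y| ≤ 2 * C / (1 - γ) + 0 * (M1 + M2) :=
    ge_of_tendsto hlim (Filter.Eventually.of_forall (fun n => key n x y))
  linarith
end

section
/- Let F(d)(x,y) = |r(x) − r(y)| + γ·d(t(x), t(y)) with γ ∈ [0,1), t: S → S, and bounded r, and let d* be its unique bounded fixed point. If r is L-Lipschitz with respect to a metric ρ on S and t is 1-Lipschitz with respect to ρ (i.e., ρ(t(x), t(y)) ≤ ρ(x,y)), then d*(x,y) ≤ (L/(1 − γ))·ρ(x,y) for all x, y. -/
/-- If `r` is `L`-Lipschitz and `t` is nonexpansive with respect to a metric on `S`, then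
the bounded fixed point `d*` of `F(d)(x,y) = |r(x) − r(y)| + γ·d(t(x), t(y))` satisfies
`d*(x,y) ≤ (L/(1 − γ))·ρ(x,y)`. -/
theorem stmt_14 {S : Type*} [MetricSpace S] [Nonempty S]
    (γ L : ℝ) (hγ0 : 0 ≤ γ) (hγ1 : γ < 1) (hL : 0 ≤ L)
    (r : S → ℝ) (t : S → S) (hrb : ∃ C, ∀ x, |r x| ≤ C)
    (hrLip : ∀ x y, |r x - r y| ≤ L * dist x y)
    (htne : ∀ x y, dist (t x) (t y) ≤ dist x y)
    (dstar : S → S → ℝ) (hdb : ∃ C, ∀ x y, |dstar x y| ≤ C)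
    (hfix : ∀ x y, dstar x y = |r x - r y| + γ * dstar (t x) (t y)) :
    ∀ x y, dstar x y ≤ (L / (1 - γ)) * dist x y := by
  obtain ⟨C, hC⟩ := hdb
  have hγ1' : (0:ℝ) < 1 - γ := by linarith
  have key : ∀ n : ℕ, ∀ x y : S,
      dstar x y ≤ (L * dist x y) * ∑ k ∈ Finset.range n, γ ^ k + γ ^ n * C := by
    intro n
    induction n with
    | zero =>
      intro x y
      simpa using (le_trans (le_abs_self _) (hC x y))
    | succ n ih =>
      intro x y
      have h1 : dstar (t x) (t y) ≤ (L * dist (t x) (t y)) * ∑ k ∈ Finset.range n, γ ^ k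
          + γ ^ n * C := ih (t x) (t y)
      have hsum : (0:ℝ) ≤ ∑ k ∈ Finset.range n, γ ^ k :=
        Finset.sum_nonneg (fun k _ => pow_nonneg hγ0 k)
      have h2 : (L * dist (t x) (t y)) ≤ L * dist x y :=
        mul_le_mul_of_nonneg_left (htne x y) hL
      have h3 : dstar (t x) (t y) ≤ (L * dist x y) * ∑ k ∈ Finset.range n, γ ^ k
          + γ ^ n * C := le_trans h1 (by nlinarith)
      rw [hfix x y, geom_sum_succ]
      have h4 : γ * dstar (t x) (t y) ≤ γ * ((L * dist x y) * ∑ k ∈ Finset.range n, γ ^ k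
          + γ ^ n * C) := mul_le_mul_of_nonneg_left h3 hγ0
      have h5 := hrLip x y
      calc |r x - r y| + γ * dstar (t x) (t y)
          ≤ L * dist x y + γ * ((L * dist x y) * ∑ k ∈ Finset.range n, γ ^ k + γ ^ n * C) :=
            add_le_add h5 h4
        _ = (L * dist x y) * (γ * ∑ k ∈ Finset.range n, γ ^ k + 1) + γ ^ (n + 1) * C := by
            ring
  intro x y
  have hlim : Filter.Tendsto
      (fun n => (L * dist x y) * ∑ k ∈ Finset.range n, γ ^ k + γ ^ n * C)
      Filter.atTop (nhds ((L * dist x y) * (1 - γ)⁻¹ + 0 * C)) := by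
    apply Filter.Tendsto.add
    · exact (hasSum_geometric_of_lt_one hγ0 hγ1).tendsto_sum_nat.const_mul _
    · exact (tendsto_pow_atTop_nhds_zero_of_lt_one hγ0 hγ1).mul_const C
  have := ge_of_tendsto' hlim (fun n => key n x y)
  calc dstar x y ≤ (L * dist x y) * (1 - γ)⁻¹ + 0 * C := this
    _ = (L / (1 - γ)) * dist x y := by ring
end
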